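/- arXiv:2407.03170 — 6 statements merged into one kernel-verified Lean document; each statement's English description precedes it below -/
import Mathlib

section
/- Let p be an odd prime, n ≥ 1, and 1 ≤ i ≤ ⌊n/2⌋ with n/gcd(n,i) odd. Then the monomial F(x) = x^{p^i + 1} is planar over F_{p^n}. -/
/-!
Write `q = p ^ i`. By additivity of Frobenius, `(x + a) ^ (q + 1) - x ^ (q + 1)` is the additive map
`z ↦ a * z ^ q + a ^ q * z` plus a constant, so it is injective unless some `w ≠ 0` has
`w ^ (q - 1) = -1`. With `N = p ^ n - 1` and `g = gcd (q - 1) N`, such a `w` would give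
`-1 = w ^ ((q - 1) * (N / g)) = 1` as soon as `N / g` is odd; and since `g = p ^ gcd n i - 1`,
`N / g` is a geometric sum of `n / gcd n i` odd terms.
-/

open Finset

lemma Nat.odd_geom_sum {x m : ℕ} (hx : Odd x) (hm : Odd m) : Odd (∑ j ∈ range m, x ^ j) := by
  rwa [odd_sum_iff_odd_card_odd, filter_true_of_mem fun j _ => hx.pow, card_range]

lemma Nat.odd_pow_sub_one_div_gcd {p n i : ℕ} (hp : Odd p) (hp1 : 1 < p)
    (h : Odd (n / n.gcd i)) : Odd ((p ^ n - 1) / Nat.gcd (p ^ i - 1) (p ^ n - 1)) := by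
  have hn : n ≠ 0 := by rintro rfl; simp at h
  have hpe : 2 ≤ p ^ n.gcd i := le_trans hp1 (Nat.le_self_pow (Nat.gcd_pos_of_pos_left i
    (Nat.pos_of_ne_zero hn)).ne' p)
  have hpn : p ^ n = (p ^ n.gcd i) ^ (n / n.gcd i) := by
    rw [← pow_mul, Nat.mul_div_cancel' (Nat.gcd_dvd_left n i)]
  rw [Nat.pow_sub_one_gcd_pow_sub_one, Nat.gcd_comm, hpn, ← Nat.geomSum_eq hpe]
  exact Nat.odd_geom_sum hp.pow h

theorem pow_ne_neg_one_of_odd_div_gcd {M : Type*} [Monoid M] [HasDistribNeg M] {u : M}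
    {r N : ℕ} (hu : u ^ N = 1) (hodd : Odd (N / r.gcd N)) (hM : (-1 : M) ≠ 1) :
    u ^ r ≠ -1 := by
  intro hr
  have hexp : r * (N / r.gcd N) = N * (r / r.gcd N) := by
    rw [← Nat.mul_div_assoc _ (Nat.gcd_dvd_right r N), ← Nat.mul_div_assoc _ (Nat.gcd_dvd_left r N),
      mul_comm]
  apply hM
  calc (-1 : M) = (u ^ r) ^ (N / r.gcd N) := by rw [hr, hodd.neg_one_pow]
    _ = (u ^ N) ^ (r / r.gcd N) := by rw [← pow_mul, ← pow_mul, hexp]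
    _ = 1 := by rw [hu, one_pow]

theorem add_pow_expChar_pow_succ_sub {R : Type*} [CommRing R] (p : ℕ) [ExpChar R p] (i : ℕ)
    (x a : R) :
    (x + a) ^ (p ^ i + 1) - x ^ (p ^ i + 1) = a * x ^ p ^ i + a ^ p ^ i * x + a ^ (p ^ i + 1) := by
  rw [pow_succ, add_pow_expChar_pow]; ring

theorem injective_add_pow_expChar_pow_succ_sub {K : Type*} [Field K] (p : ℕ) [ExpChar K p]
    (i : ℕ) {a : K} (ha : a ≠ 0) (h : ∀ z : K, z ≠ 0 → z ^ (p ^ i - 1) ≠ -1) :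
    Function.Injective fun x : K => (x + a) ^ (p ^ i + 1) - x ^ (p ^ i + 1) := by
  intro x y hxy
  obtain ⟨z, rfl⟩ : ∃ z, x = y + a * z := ⟨(x - y) / a, by rw [mul_div_cancel₀ _ ha]; ring⟩
  simp only [add_pow_expChar_pow_succ_sub p, add_pow_expChar_pow] at hxy
  suffices z = 0 by simp [this]
  by_contra hz
  have hq : p ^ i - 1 + 1 = p ^ i := Nat.sub_add_cancel (Nat.one_le_pow _ _ (expChar_pos K p))
  have hroot : a ^ (p ^ i + 1) * z * (z ^ (p ^ i - 1) + 1) = 0 := by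
    calc a ^ (p ^ i + 1) * z * (z ^ (p ^ i - 1) + 1)
        = a ^ (p ^ i + 1) * (z ^ (p ^ i - 1 + 1) + z) := by ring
      _ = a * (a * z) ^ p ^ i + a ^ p ^ i * (a * z) := by rw [hq]; ring
      _ = 0 := by linear_combination hxy
  exact h z hz (eq_neg_of_add_eq_zero_left
    ((mul_eq_zero.1 hroot).resolve_left (mul_ne_zero (pow_ne_zero _ ha) hz)))

theorem albert_monomial_planar_general (p : ℕ) [Fact p.Prime] (hp : Odd p)
    (n i : ℕ)
    (hodd : Odd (n / Nat.gcd n i)) :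
    ∀ a : GaloisField p n, a ≠ 0 →
      Function.Bijective
        (fun x : GaloisField p n => (x + a) ^ (p ^ i + 1) - x ^ (p ^ i + 1)) := by
  intro a ha
  have hn : n ≠ 0 := by rintro rfl; simp at hodd
  have : Fintype (GaloisField p n) := Fintype.ofFinite _
  have hcard : Fintype.card (GaloisField p n) = p ^ n := by
    rw [Fintype.card_eq_nat_card, GaloisField.card p n hn]
  have hneg : (-1 : GaloisField p n) ≠ 1 := Ring.neg_one_ne_one_of_char_ne_two <| by
    rw [ringChar.eq (GaloisField p n) p]; exact hp.ne_two_of_dvd_nat dvd_rfl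
  refine Finite.injective_iff_bijective.mp
    (injective_add_pow_expChar_pow_succ_sub p i ha fun z hz => ?_)
  refine pow_ne_neg_one_of_odd_div_gcd (FiniteField.pow_card_sub_one_eq_one z hz) ?_ hneg
  rw [hcard]
  exact Nat.odd_pow_sub_one_div_gcd hp (Fact.out : p.Prime).one_lt hodd

/-- Albert's twisted fields: `x^(p^i+1)` is planar over `F_{p^n}` when
`n / gcd(n,i)` is odd. -/
theorem albert_monomial_planar (p : ℕ) [Fact p.Prime] (hp : Odd p)
    (n i : ℕ) (hn : 1 ≤ n) (hi1 : 1 ≤ i) (hi2 : i ≤ n / 2)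
    (hodd : Odd (n / Nat.gcd n i)) :
    ∀ a : GaloisField p n, a ≠ 0 →
      Function.Bijective
        (fun x : GaloisField p n => (x + a) ^ (p ^ i + 1) - x ^ (p ^ i + 1)) :=
  albert_monomial_planar_general p hp n i hodd
end

section
/- Let p be an odd prime, n ≥ 1, and i ≥ 1 such that n/gcd(n,i) is even. Then F(x) = x^{p^i+1} is not planar over F_{p^n}. -/
/-!
Since `(x + 1) ^ (p ^ i + 1) - x ^ (p ^ i + 1) = x ^ p ^ i + x + 1`, the derivative in direction
`1` fails to be injective as soon as some `x ≠ 0` satisfies `x ^ p ^ i = -x`. Put `d = gcd n i`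
and `b = p ^ d`. As `n / d` is even, `2 (b - 1)` divides `p ^ n - 1`, so the cyclic group
`F_{p^n}ˣ` contains an `x` with `x ^ (b - 1) = -1`, i.e. `x ^ b = -x`. Iterating, `x ^ b ^ k =
(-1) ^ k x`, and `k = i / d` is odd because it is coprime to the even number `n / d`.
-/

theorem FiniteField.exists_pow_eq_neg_one {K : Type*} [Field K] [Finite K] {k : ℕ}
    (hk : 2 * k ∣ Nat.card K - 1) : ∃ x : K, x ≠ 0 ∧ x ^ k = -1 := by
  obtain ⟨g, hg⟩ := IsCyclic.exists_ofOrder_eq_natCard (α := Kˣ)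
  rw [← Nat.card_units, ← hg] at hk
  have hζ : IsPrimitiveRoot (g ^ (orderOf g / (2 * k)) : K) (2 * k) :=
    IsPrimitiveRoot.coe_units_iff.mpr <| IsPrimitiveRoot.iff_orderOf.mpr <|
      orderOf_pow_orderOf_div (orderOf_pos g).ne' hk
  exact ⟨_, by simp,
    (hζ.pow (Nat.pos_of_dvd_of_pos hk (orderOf_pos g)) (mul_comm 2 k)).eq_neg_one_of_two_right⟩

theorem Nat.two_mul_sub_one_dvd_pow_sub_one {b m : ℕ} (hb : Odd b) (hm : Even m) :
    2 * (b - 1) ∣ b ^ m - 1 :=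
  calc 2 * (b - 1) ∣ (b + 1) * (b - 1) := mul_dvd_mul_right (even_iff_two_dvd.mp hb.add_one) _
    _ = b ^ 2 - 1 := by rw [← Nat.sq_sub_sq, one_pow]
    _ ∣ b ^ m - 1 := Nat.pow_sub_one_dvd_pow_sub_one b (even_iff_two_dvd.mp hm)

theorem Nat.odd_div_gcd_of_even_div_gcd {n i : ℕ} (hn : n ≠ 0) (heven : Even (n / n.gcd i)) :
    Odd (i / n.gcd i) :=
  ((Nat.coprime_div_gcd_div_gcd (Nat.gcd_pos_of_pos_left i (Nat.pos_of_ne_zero hn)))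
    |>.coprime_dvd_left (even_iff_two_dvd.mp heven)).odd_of_left

theorem pow_pow_eq_neg_one_pow_mul {M : Type*} [Monoid M] [HasDistribNeg M] {x : M} {b : ℕ}
    (hb : Odd b) (hx : x ^ b = -x) (k : ℕ) : x ^ b ^ k = (-1) ^ k * x := by
  induction k with
  | zero => simp
  | succ k ih =>
    rw [pow_succ, pow_mul, ih, ((Commute.neg_one_left x).pow_left k).mul_pow, pow_right_comm,
      hb.neg_one_pow, hx, pow_succ]
    simp

theorem add_one_pow_char_pow_add_one_sub {R : Type*} [CommRing R] (p : ℕ) [Fact p.Prime]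
    [CharP R p] (x : R) (i : ℕ) :
    (x + 1) ^ (p ^ i + 1) - x ^ (p ^ i + 1) = x ^ p ^ i + x + 1 := by
  rw [pow_succ, pow_succ, add_pow_char_pow, one_pow]
  ring

theorem albert_monomial_not_planar_general (p : ℕ) [Fact p.Prime] (hp : Odd p)
    (n i : ℕ) (hn : 1 ≤ n)
    (heven : Even (n / Nat.gcd n i)) :
    ¬ (∀ a : GaloisField p n, a ≠ 0 →
        Function.Bijective
          (fun x : GaloisField p n => (x + a) ^ (p ^ i + 1) - x ^ (p ^ i + 1))) := by
  intro hplanar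
  set d := n.gcd i
  have hb : Odd (p ^ d) := hp.pow
  have hdvd : 2 * (p ^ d - 1) ∣ Nat.card (GaloisField p n) - 1 := by
    rw [GaloisField.card p n (by omega), ← Nat.mul_div_cancel' (Nat.gcd_dvd_left n i), pow_mul]
    exact Nat.two_mul_sub_one_dvd_pow_sub_one hb heven
  obtain ⟨x, hx0, hx⟩ := FiniteField.exists_pow_eq_neg_one hdvd
  have hxb : x ^ p ^ d = -x := by
    rw [← Nat.sub_add_cancel hb.pos, pow_succ, hx, neg_one_mul]
  have hxq : x ^ p ^ i = -x := by
    rw [← Nat.mul_div_cancel' (Nat.gcd_dvd_right n i), pow_mul, pow_pow_eq_neg_one_pow_mul hb hxb,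
      (Nat.odd_div_gcd_of_even_div_gcd (by omega) heven).neg_one_pow, neg_one_mul]
  refine hx0 ((hplanar 1 one_ne_zero).injective ?_)
  simp only [add_one_pow_char_pow_add_one_sub p, hxq]
  simp [hp.pos.ne']

/-- If `n / gcd(n,i)` is even, then `x^(p^i+1)` is not planar over `F_{p^n}`. -/
theorem albert_monomial_not_planar (p : ℕ) [Fact p.Prime] (hp : Odd p)
    (n i : ℕ) (hn : 1 ≤ n) (hi : 1 ≤ i)
    (heven : Even (n / Nat.gcd n i)) :
    ¬ (∀ a : GaloisField p n, a ≠ 0 →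
        Function.Bijective
          (fun x : GaloisField p n => (x + a) ^ (p ^ i + 1) - x ^ (p ^ i + 1))) :=
  albert_monomial_not_planar_general p hp n i hn heven
end

section
/- Let p be an odd prime, q = p^m with m ≥ 2, and 0 < i < m with gcd(i, m) = gcd(i, 2m). Then the linearized polynomial M(x) = 3x − x^{p^i} + x^q + x^{q p^i} is a permutation of F_{q^2}. -/
/-!
Write `σ = x ↦ x^{p^i}` and `τ = x ↦ x^q`, both additive, and split `x` into its `τ`-even part
`y = x + x^τ` and `τ`-odd part `w = x - x^τ`. Then `M(x) = 2y + w - w^σ`, and since `M` commutes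
with `τ`, also `M(x)^τ = 2y - w + w^σ`. So `M(x) = 0` forces `y = 0` and `w^σ = w`. Being fixed by
`σ` and by `τ² = id`, `w` lies in `F_{p^gcd(i,2m)} = F_{p^gcd(i,m)} ⊆ F_q`, so `w^τ = w`; as also
`w^τ = -w`, we get `w = 0`. Hence `M` has trivial kernel and is bijective on the finite field.
-/

open Function

section FixedByPowers

variable {M : Type*} [Monoid M] {w : M} {p a b : ℕ}

theorem isPeriodicPt_pow_iff : IsPeriodicPt (· ^ p) a w ↔ w ^ p ^ a = w := by
  rw [IsPeriodicPt, IsFixedPt, pow_iterate]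

theorem pow_pow_gcd_eq_self (ha : w ^ p ^ a = w) (hb : w ^ p ^ b = w) : w ^ p ^ a.gcd b = w :=
  isPeriodicPt_pow_iff.mp <| (isPeriodicPt_pow_iff.mpr ha).gcd (isPeriodicPt_pow_iff.mpr hb)

theorem pow_pow_eq_self_of_dvd (ha : w ^ p ^ a = w) (hab : a ∣ b) : w ^ p ^ b = w :=
  isPeriodicPt_pow_iff.mp <| (isPeriodicPt_pow_iff.mpr ha).trans_dvd hab

end FixedByPowers

theorem GaloisField.pow_prime_pow_eq_self (p : ℕ) [Fact p.Prime] (n : ℕ) (z : GaloisField p n) :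
    z ^ p ^ n = z := by
  rcases eq_or_ne n 0 with rfl | hn
  · simp
  · have : Fintype (GaloisField p n) := Fintype.ofFinite _
    rw [← GaloisField.card p n hn, Nat.card_eq_fintype_card]
    exact FiniteField.pow_card z

section LinearizedM

variable {F : Type*} [Field F] (p : ℕ) [Fact p.Prime] [CharP F p] (m i : ℕ)

def linearizedM : F →+ F :=
  AddMonoidHom.mk' (fun x => 3 * x - x ^ p ^ i + x ^ p ^ m + x ^ (p ^ m * p ^ i)) fun x y => by
    simp only [pow_mul, add_pow_char_pow]
    ring

theorem linearizedM_apply (x : F) :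
    linearizedM p m i x = 3 * x - x ^ p ^ i + x ^ p ^ m + x ^ (p ^ m * p ^ i) :=
  rfl

theorem linearizedM_eq_even_add_odd (x : F) :
    linearizedM p m i x =
      2 * (x + x ^ p ^ m) + ((x - x ^ p ^ m) - (x - x ^ p ^ m) ^ p ^ i) := by
  rw [linearizedM_apply, sub_pow_char_pow, ← pow_mul]
  ring

theorem linearizedM_pow_pow (x : F) :
    linearizedM p m i (x ^ p ^ m) = linearizedM p m i x ^ p ^ m := by
  rw [linearizedM_apply, linearizedM_apply, ← iterateFrobenius_def p m (3 * x - _ + _ + _)]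
  simp only [map_add, map_sub, map_mul, map_ofNat, iterateFrobenius_def, ← pow_mul]
  ring

theorem eq_zero_of_linearizedM_eq_zero (h2 : (2 : F) ≠ 0) (hτ : ∀ z : F, z ^ p ^ (2 * m) = z)
    (hgcd : Nat.gcd i m = Nat.gcd i (2 * m)) {x : F} (hx : linearizedM p m i x = 0) : x = 0 := by
  have hττ : (x ^ p ^ m) ^ p ^ m = x := by rw [← pow_mul, ← pow_add, ← two_mul, hτ]
  have hM := linearizedM_eq_even_add_odd p m i x
  have hMτ := linearizedM_eq_even_add_odd p m i (x ^ p ^ m)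
  rw [linearizedM_pow_pow, hx, hττ, zero_pow (pow_ne_zero _ (Fact.out : p.Prime).ne_zero)] at hMτ
  rw [hx, sub_pow_char_pow] at hM
  rw [sub_pow_char_pow] at hMτ
  have hcancel {z : F} (h : 2 * z = 0) : z = 0 := (mul_eq_zero.mp h).resolve_left h2
  have hy : x + x ^ p ^ m = 0 := hcancel <| hcancel <| by linear_combination -hM - hMτ
  set w := x - x ^ p ^ m
  have hwσ : w ^ p ^ i = w := by
    rw [sub_pow_char_pow]
    exact (sub_eq_zero.mp (hcancel (by linear_combination hMτ - hM))).symm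
  have hwτ : w ^ p ^ m = w :=
    pow_pow_eq_self_of_dvd (hgcd ▸ pow_pow_gcd_eq_self hwσ (hτ w)) (Nat.gcd_dvd_right i m)
  have hw : w = 0 := hcancel <| by
    rw [sub_pow_char_pow, hττ] at hwτ
    linear_combination -hwτ
  exact hcancel <| by linear_combination hy + hw

theorem linearizedM_injective (h2 : (2 : F) ≠ 0) (hτ : ∀ z : F, z ^ p ^ (2 * m) = z)
    (hgcd : Nat.gcd i m = Nat.gcd i (2 * m)) : Injective (linearizedM (F := F) p m i) :=
  (injective_iff_map_eq_zero _).mpr fun _ => eq_zero_of_linearizedM_eq_zero p m i h2 hτ hgcd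

end LinearizedM

theorem linearized_M_is_permutation_general (p : ℕ) [Fact p.Prime] (hp : Odd p)
    (m i : ℕ)
    (hgcd : Nat.gcd i m = Nat.gcd i (2 * m)) :
    Function.Bijective
      (fun x : GaloisField p (2 * m) =>
        3 * x - x ^ (p ^ i) + x ^ (p ^ m) + x ^ (p ^ m * p ^ i)) := by
  have h2 : (2 : GaloisField p (2 * m)) ≠ 0 :=
    Ring.two_ne_zero <| (ringChar.eq _ p).trans_ne (hp.ne_two_of_dvd_nat dvd_rfl)
  exact Finite.injective_iff_bijective.mp <|
    linearizedM_injective p m i h2 (GaloisField.pow_prime_pow_eq_self p _) hgcd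

/-- The linearized polynomial `M(x) = 3x - x^{p^i} + x^q + x^{q p^i}` (with `q = p^m`)
is a permutation of `F_{q^2}` when `gcd(i,m) = gcd(i,2m)`. -/
theorem linearized_M_is_permutation (p : ℕ) [Fact p.Prime] (hp : Odd p)
    (m i : ℕ) (hm : 2 ≤ m) (hi1 : 0 < i) (hi2 : i < m)
    (hgcd : Nat.gcd i m = Nat.gcd i (2 * m)) :
    Function.Bijective
      (fun x : GaloisField p (2 * m) =>
        3 * x - x ^ (p ^ i) + x ^ (p ^ m) + x ^ (p ^ m * p ^ i)) :=
  linearized_M_is_permutation_general p hp m i hgcd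
end

section
/- Let p be an odd prime, q = p^m with m ≥ 2, and 0 < i < m with gcd(i,m) = gcd(i,2m). Then x^2 + x^{q+1} − x^{(q+1)p^i} + x^{2q p^i} is a planar function over F_{q^2}. -/
/-!
Let `t x = x ^ q` and `s x = x ^ p ^ i`, and split `F_{q^2} = k ⊕ kβ` with `k = F_q` the fixed
field of `t` and `t β = -β`. Then `F x = x² + t x · x - s (t x) · s x + s (t x)²`, and
`F (x + a) - F x - F a` is additive in `x`, so planarity means this polar form has no nonzero
root `x` when `a ≠ 0`. Writing `x = u + vβ`, `a = c + dβ`, the polar form is twice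
`2 (u c + j σ(v) σ(d)) + (w - s w)`, where `j = s(β)²`, `σ = s|_k` and `w = (u d + v c) β`;
the first summand is fixed by `t` and the second negated, so both vanish. An element fixed by
`s` lies in `F_{p^gcd(i,2m)} = F_{p^gcd(i,m)} ⊆ k`, so `w = 0`. What remains is that Dickson's
multiplication `(u, v) * (c, d) = (u c + j σ(v) σ(d), u d + v c)` has no zero divisors: this
holds because `σ(x) x = x ^ (p^i + 1)` is a square in `k`, while `j` is not.
-/

open Function

theorem pow_pow_eq_self_iff_isPeriodicPt {M : Type*} [Monoid M] {x : M} {n k : ℕ} :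
    x ^ n ^ k = x ↔ IsPeriodicPt (· ^ n) k x := by
  rw [IsPeriodicPt, IsFixedPt, pow_iterate]

theorem pow_pow_eq_self_of_gcd_dvd {M : Type*} [Monoid M] {x : M} {n a b c : ℕ}
    (ha : x ^ n ^ a = x) (hb : x ^ n ^ b = x) (hc : a.gcd b ∣ c) : x ^ n ^ c = x := by
  rw [pow_pow_eq_self_iff_isPeriodicPt] at ha hb ⊢
  obtain ⟨k, rfl⟩ := hc
  exact (ha.gcd hb).mul_const k

theorem exists_pow_card_pow_ne_self (K L : Type*) [Field K] [Fintype K] [Field L] [Algebra K L]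
    [Finite L] {n : ℕ} (hn0 : n ≠ 0) (hn : n < Module.finrank K L) :
    ∃ x : L, x ^ Fintype.card K ^ n ≠ x := by
  have hne := pow_ne_one_of_lt_orderOf hn0
    (hn.trans_eq (FiniteField.orderOf_frobeniusAlgHom K L).symm)
  contrapose! hne
  ext x
  simp [FiniteField.coe_frobeniusAlgHom, pow_iterate, hne]

theorem GaloisField.pow_pow_self (p : ℕ) [Fact p.Prime] {n : ℕ} (hn : n ≠ 0)
    (x : GaloisField p n) : x ^ p ^ n = x := by
  have := Fintype.ofFinite (GaloisField p n)
  rw [← GaloisField.card p n hn, Nat.card_eq_fintype_card, FiniteField.pow_card]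

section Dickson

variable {K : Type*} [Field K] (t s : K →+* K)

def dicksonQuad (z : K) : K :=
  z ^ 2 + t z * z - s (t z) * s z + s (t z) ^ 2

def dicksonPolar (a : K) : K →+ K :=
  AddMonoidHom.mk'
    (fun z ↦ 2 * z * a + (z * t a + a * t z) - (s z * s (t a) + s a * s (t z))
      + 2 * (s (t z) * s (t a)))
    (fun x y ↦ by simp only [map_add]; ring)

theorem dicksonQuad_add_sub (z a : K) :
    dicksonQuad t s (z + a) - dicksonQuad t s z =
      dicksonPolar t s a z + dicksonQuad t s a := by
  simp only [dicksonQuad, dicksonPolar, AddMonoidHom.mk'_apply, map_add]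
  ring

variable {t s}

theorem eq_zero_of_fixed_add_anti_eq_zero (h2 : (2 : K) ≠ 0) {x y : K} (hx : t x = x)
    (hy : t y = -y) (h : x + y = 0) : x = 0 ∧ y = 0 := by
  have h' : x - y = 0 := by simpa [hx, hy, ← sub_eq_add_neg] using congrArg t h
  constructor
  · exact (mul_eq_zero.1 (by linear_combination h + h' : 2 * x = 0)).resolve_left h2
  · exact (mul_eq_zero.1 (by linear_combination h - h' : 2 * y = 0)).resolve_left h2

theorem exists_fixed_add_mul_anti (ht : ∀ x, t (t x) = x) (h2 : (2 : K) ≠ 0) {β : K}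
    (hβ0 : β ≠ 0) (hβ : t β = -β) (z : K) : ∃ u v, t u = u ∧ t v = v ∧ z = u + v * β := by
  refine ⟨(z + t z) / 2, (z - t z) / (2 * β), ?_, ?_, by field_simp; ring⟩
  · rw [map_div₀, map_add, ht, map_ofNat, add_comm]
  · rw [map_div₀, map_sub, ht, map_mul, map_ofNat, hβ]
    field_simp
    ring

theorem dicksonPolar_fixed_add_mul_anti {β : K} (hβ : t β = -β) {u v c d : K}
    (hu : t u = u) (hv : t v = v) (hc : t c = c) (hd : t d = d) :
    dicksonPolar t s (c + d * β) (u + v * β) =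
      2 * (2 * (u * c + s β ^ 2 * (s v * s d)) +
        ((u * d + v * c) * β - s ((u * d + v * c) * β))) := by
  simp only [dicksonPolar, AddMonoidHom.mk'_apply, map_add, map_mul, map_neg, hu, hv, hc, hd,
    hβ]
  ring

theorem dickson_eq_zero_or_eq_zero (hts : ∀ x, t (s x) = s (t x)) (h2 : (2 : K) ≠ 0)
    (hsq : ∀ x, t x = x → ∃ y, t y = y ∧ s x * x = y ^ 2) {β : K} (hβ0 : β ≠ 0) (hβ : t β = -β)
    {u v c d : K} (hu : t u = u) (hv : t v = v) (hd : t d = d)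
    (h₁ : u * c + s β ^ 2 * (s v * s d) = 0) (h₂ : u * d + v * c = 0) :
    (u = 0 ∧ v = 0) ∨ (c = 0 ∧ d = 0) := by
  have hvd : v * d = 0 := by
    obtain ⟨y, hy, hvdy⟩ := hsq (v * d) (by rw [map_mul, hv, hd])
    rw [map_mul] at hvdy
    have hsq_eq : (u * d - s β * y) * (u * d + s β * y) = 0 := by
      linear_combination (u * d) * h₂ - (v * d) * h₁ + s β ^ 2 * hvdy
    have hfix : t (u * d) = u * d := by rw [map_mul, hu, hd]
    have hanti : t (s β * y) = -(s β * y) := by rw [map_mul, hts, hβ, map_neg, hy]; ring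
    have hy0 : s β * y = 0 := by
      rcases mul_eq_zero.1 hsq_eq with h | h
      · refine neg_eq_zero.1 (eq_zero_of_fixed_add_anti_eq_zero h2 hfix ?_ ?_).2
        · rw [map_neg, hanti, neg_neg]
        · rwa [← sub_eq_add_neg]
      · exact (eq_zero_of_fixed_add_anti_eq_zero h2 hfix hanti h).2
    have : y = 0 := (mul_eq_zero.1 hy0).resolve_left ((map_ne_zero s).2 hβ0)
    simpa [this] using hvdy
  rcases mul_eq_zero.1 hvd with rfl | rfl <;> simp at h₁ h₂ ⊢ <;> tauto

theorem dicksonPolar_eq_zero (ht : ∀ x, t (t x) = x) (hts : ∀ x, t (s x) = s (t x))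
    (h2 : (2 : K) ≠ 0) (hst : ∀ x, s x = x → t x = x)
    (hsq : ∀ x, t x = x → ∃ y, t y = y ∧ s x * x = y ^ 2) {β : K} (hβ0 : β ≠ 0) (hβ : t β = -β)
    {a z : K} (ha : a ≠ 0) (hz : dicksonPolar t s a z = 0) : z = 0 := by
  obtain ⟨u, v, hu, hv, rfl⟩ := exists_fixed_add_mul_anti ht h2 hβ0 hβ z
  obtain ⟨c, d, hc, hd, rfl⟩ := exists_fixed_add_mul_anti ht h2 hβ0 hβ a
  rw [dicksonPolar_fixed_add_mul_anti hβ hu hv hc hd] at hz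
  set w := (u * d + v * c) * β
  have hw : t w = -w := by simp only [w, map_mul, map_add, hu, hv, hc, hd, hβ]; ring
  have hX : t (2 * (u * c + s β ^ 2 * (s v * s d))) =
      2 * (u * c + s β ^ 2 * (s v * s d)) := by
    simp only [map_mul, map_add, map_pow, map_ofNat, hts, hu, hv, hc, hd, hβ, map_neg, neg_sq]
  have hY : t (w - s w) = -(w - s w) := by rw [map_sub, hts, hw, map_neg]; ring
  obtain ⟨h₁, h₂⟩ :=
    eq_zero_of_fixed_add_anti_eq_zero h2 hX hY ((mul_eq_zero.1 hz).resolve_left h2)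
  have hw0 : w = 0 := by
    have hsw : s w = w := (sub_eq_zero.1 h₂).symm
    exact (mul_eq_zero.1 (by linear_combination hw - hst w hsw : 2 * w = 0)).resolve_left h2
  rcases dickson_eq_zero_or_eq_zero hts h2 hsq hβ0 hβ hu hv hd ((mul_eq_zero.1 h₁).resolve_left h2)
    ((mul_eq_zero.1 hw0).resolve_right hβ0) with ⟨rfl, rfl⟩ | ⟨rfl, rfl⟩
  · simp
  · simp at ha

theorem dicksonQuad_planar [Finite K] (ht : ∀ x, t (t x) = x) (hts : ∀ x, t (s x) = s (t x))
    (h2 : (2 : K) ≠ 0) (hst : ∀ x, s x = x → t x = x)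
    (hsq : ∀ x, t x = x → ∃ y, t y = y ∧ s x * x = y ^ 2) {β : K} (hβ0 : β ≠ 0) (hβ : t β = -β)
    {a : K} (ha : a ≠ 0) : Bijective fun x ↦ dicksonQuad t s (x + a) - dicksonQuad t s x := by
  rw [← Finite.injective_iff_bijective]
  intro x y hxy
  simp only [dicksonQuad_add_sub, add_left_inj] at hxy
  exact sub_eq_zero.1 <| dicksonPolar_eq_zero ht hts h2 hst hsq hβ0 hβ ha <| by
    rw [map_sub, hxy, sub_self]

end Dickson

theorem dickson_quadrinomial_planar_general (p : ℕ) [Fact p.Prime] (hp : Odd p)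
    (m i : ℕ) (hm : 2 ≤ m)
    (hgcd : Nat.gcd i m = Nat.gcd i (2 * m))
    (F : GaloisField p (2 * m) → GaloisField p (2 * m))
    (hF : ∀ x, F x = x ^ 2 + x ^ (p ^ m + 1)
        - x ^ ((p ^ m + 1) * p ^ i) + x ^ (2 * p ^ m * p ^ i)) :
    ∀ a : GaloisField p (2 * m), a ≠ 0 →
      Function.Bijective (fun x => F (x + a) - F x) := by
  intro a ha
  let t := iterateFrobenius (GaloisField p (2 * m)) p m
  let s := iterateFrobenius (GaloisField p (2 * m)) p i
  have hFt : F = dicksonQuad t s := funext fun x ↦ by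
    simp only [hF, dicksonQuad, t, s, iterateFrobenius_def]
    ring
  have ht (x) : t (t x) = x := by
    simp only [t, iterateFrobenius_def, ← pow_mul, ← pow_add, ← two_mul]
    exact GaloisField.pow_pow_self p (by omega) x
  have hst (x) (hx : s x = x) : t x = x :=
    pow_pow_eq_self_of_gcd_dvd hx (GaloisField.pow_pow_self p (by omega) x)
      (hgcd ▸ Nat.gcd_dvd_right i m)
  have hsq (x) (hx : t x = x) : ∃ y, t y = y ∧ s x * x = y ^ 2 := by
    obtain ⟨k, hk⟩ := hp.pow (n := i)
    exact ⟨x ^ (k + 1), by rw [map_pow, hx], by simp only [s, iterateFrobenius_def, hk]; ring⟩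
  obtain ⟨y, hy⟩ : ∃ y, t y ≠ y := by
    simpa [ZMod.card, t, iterateFrobenius_def] using
      exists_pow_card_pow_ne_self (ZMod p) (GaloisField p (2 * m)) (n := m) (by omega)
        (by rw [GaloisField.finrank p (by omega)]; omega)
  rw [hFt]
  exact dicksonQuad_planar ht (fun x ↦ pow_right_comm x _ _)
    (Ring.two_ne_zero (hp.ne_two_of_dvd_nat (dvd_of_eq (ringChar.eq _ p)))) hst hsq
    (sub_ne_zero.2 hy.symm) (by rw [map_sub, ht, neg_sub]) ha

/-- The quadrinomial `x^2 + x^{q+1} - x^{(q+1)p^i} + x^{2qp^i}` is planar over `F_{q^2}`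
when `gcd(i,m) = gcd(i,2m)`, representing the Dickson semifield. -/
theorem dickson_quadrinomial_planar (p : ℕ) [Fact p.Prime] (hp : Odd p)
    (m i : ℕ) (hm : 2 ≤ m) (hi1 : 0 < i) (hi2 : i < m)
    (hgcd : Nat.gcd i m = Nat.gcd i (2 * m))
    (F : GaloisField p (2 * m) → GaloisField p (2 * m))
    (hF : ∀ x, F x = x ^ 2 + x ^ (p ^ m + 1)
        - x ^ ((p ^ m + 1) * p ^ i) + x ^ (2 * p ^ m * p ^ i)) :
    ∀ a : GaloisField p (2 * m), a ≠ 0 →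
      Function.Bijective (fun x => F (x + a) - F x) :=
  dickson_quadrinomial_planar_general p hp m i hm hgcd F hF
end

section
/- Let (S, +, ⋆) be a finite presemifield. Then the additive group (S, +) is an elementary abelian p-group for some prime p; in particular |S| is a prime power. -/
/-!
Choose `a ≠ 0` of prime additive order `p` (Cauchy). Multiplication by `a` has no kernel, so on the
finite set `S` it is onto, and every `x = a ⋆ y` satisfies `p • x = (p • a) ⋆ y = 0`. Hence `S` is a
vector space over `ZMod p`, of cardinality `p ^ dim`.
-/

open Function

namespace AddMonoidHom

variable {M N P : Type*}

theorem nsmul_eq_zero_of_apply_surjective [AddMonoid M] [AddZeroClass N] [AddCommMonoid P]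
    (f : M →+ N →+ P) {a : M} {n : ℕ} (ha : n • a = 0) (hf : Surjective (f a)) (z : P) :
    n • z = 0 := by
  obtain ⟨y, rfl⟩ := hf z
  rw [← nsmul_apply, ← map_nsmul, ha, map_zero, zero_apply]

theorem apply_surjective_of_eq_zero_or_eq_zero [AddZeroClass M] [AddCommGroup N] [Finite N]
    (f : M →+ N →+ N) (hf : ∀ a b, f a b = 0 → a = 0 ∨ b = 0) {a : M} (ha : a ≠ 0) :
    Surjective (f a) :=
  Finite.injective_iff_surjective.mp <|
    (injective_iff_map_eq_zero (f a)).mpr fun b hb => (hf a b hb).resolve_left ha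

end AddMonoidHom

theorem AddCommGroup.exists_card_eq_pow_of_forall_nsmul_eq_zero {G : Type*} [AddCommGroup G]
    [Fintype G] {p : ℕ} (hp : p.Prime) (h : ∀ x : G, p • x = 0) :
    ∃ n : ℕ, Fintype.card G = p ^ n := by
  have : Fact p.Prime := ⟨hp⟩
  let _ : Module (ZMod p) G := AddCommGroup.zmodModule h
  exact ⟨Module.finrank (ZMod p) G, by rw [Module.card_eq_pow_finrank (K := ZMod p), ZMod.card]⟩

/-- Knuth: the additive group of a finite presemifield is elementary abelian, so its
cardinality is a prime power. -/
theorem presemifield_additive_group_elementary_abelian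
    (S : Type*) [Fintype S] [AddCommGroup S] (star : S → S → S)
    (hld : ∀ a b c : S, star (a + b) c = star a c + star b c)
    (hrd : ∀ a b c : S, star a (b + c) = star a b + star a c)
    (hnz : ∀ a b : S, star a b = 0 → a = 0 ∨ b = 0) :
    ∃ p : ℕ, p.Prime ∧ (∀ x : S, p • x = 0) ∧ ∃ n : ℕ, Fintype.card S = p ^ n := by
  rcases subsingleton_or_nontrivial S with _ | _
  · exact ⟨2, Nat.prime_two, fun _ => Subsingleton.elim _ _, 0,
    Fintype.card_eq_one_iff.mpr ⟨0, fun _ => Subsingleton.elim _ _⟩⟩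
  let f : S →+ S →+ S :=
    AddMonoidHom.mk' (fun a => AddMonoidHom.mk' (star a) (hrd a)) fun a b =>
      AddMonoidHom.ext (hld a b)
  set p := (Fintype.card S).minFac
  have hp : p.Prime := Nat.minFac_prime Fintype.one_lt_card.ne'
  have : Fact p.Prime := ⟨hp⟩
  obtain ⟨a, hap⟩ := exists_prime_addOrderOf_dvd_card p (Nat.minFac_dvd _)
  have ha : a ≠ 0 := fun h => hp.one_lt.ne' (by rw [← hap, h, addOrderOf_zero])
  have hkill : ∀ x : S, p • x = 0 :=
    f.nsmul_eq_zero_of_apply_surjective (hap ▸ addOrderOf_nsmul_eq_zero a)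
      (f.apply_surjective_of_eq_zero_or_eq_zero hnz ha)
  exact ⟨p, hp, hkill, AddCommGroup.exists_card_eq_pow_of_forall_nsmul_eq_zero hp hkill⟩
end

section
/- Over F_{3^4}, the function F(x) = x^{36} + 2x^{10} + 2x^4 is planar. -/
instance : Fact (Nat.Prime 3) := ⟨by norm_num⟩

/-!
Write `F(x + a) - F(x) = F(a) + B(x, a)` with `B` biadditive. With `τ z = z ^ 9`, the involution
of `F_{3^4}` over `F_9`, one has `B = τ G - G - H` for `G = x^3 a + x a^3` and the `τ`-fixed
`H = x^9 a + x a^9`; adding `B` and `τ B` shows that `B = 0` forces `H = 0` and `τ G = G`.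
For `x = u a`, the first gives `u^9 = -u`, and then the second reads
`a^4 (a^32 + 1) (u^3 + u) = 0`. Here `a^32 = -1` is impossible, as it would give `a^64 = 1`,
hence `a^16 = 1` by `a^80 = 1`; so `u^3 = -u`, hence `u^9 = u = -u` and `u = 0`.
-/

section CharThree

variable {R : Type*} [CommRing R] [CharP R 3]

lemma add_pow_nine (x y : R) : (x + y) ^ 9 = x ^ 9 + y ^ 9 :=
  add_pow_char_pow x y (p := 3) (n := 2)

lemma sub_pow_nine (x y : R) : (x - y) ^ 9 = x ^ 9 - y ^ 9 :=
  sub_pow_char_pow x y (p := 3) (n := 2)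

lemma sub_pow_twentyseven (x y : R) : (x - y) ^ 27 = x ^ 27 - y ^ 27 :=
  sub_pow_char_pow x y (p := 3) (n := 3)

def trinomial (x : R) : R := x ^ 36 + 2 * x ^ 10 + 2 * x ^ 4

def trinomialPolar (x a : R) : R :=
  x ^ 27 * a ^ 9 + x ^ 9 * a ^ 27 - x ^ 9 * a - x * a ^ 9 - x ^ 3 * a - x * a ^ 3

lemma trinomial_add_sub (x a : R) :
    trinomial (x + a) - trinomial x = trinomial a + trinomialPolar x a := by
  have h3 : (3 : R) = 0 := CharP.cast_eq_zero R 3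
  have e27 : (x + a) ^ 27 = x ^ 27 + a ^ 27 := add_pow_char_pow x a (p := 3) (n := 3)
  have e36 : (x + a) ^ 36 = (x ^ 27 + a ^ 27) * (x ^ 9 + a ^ 9) := by
    rw [← e27, ← add_pow_nine, ← pow_add]
  have e10 : (x + a) ^ 10 = (x ^ 9 + a ^ 9) * (x + a) := by rw [← add_pow_nine, pow_succ]
  have e4 : (x + a) ^ 4 = (x ^ 3 + a ^ 3) * (x + a) := by rw [← add_pow_char, pow_succ]
  simp only [trinomial, trinomialPolar, e36, e10, e4]
  linear_combination (x ^ 9 * a + x * a ^ 9 + x ^ 3 * a + x * a ^ 3) * h3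

lemma trinomialPolar_sub_left (x y a : R) :
    trinomialPolar (x - y) a = trinomialPolar x a - trinomialPolar y a := by
  simp only [trinomialPolar, sub_pow_twentyseven, sub_pow_nine, sub_pow_char]
  ring

lemma trinomialPolar_eq (x a : R) :
    trinomialPolar x a
      = (x ^ 3 * a + x * a ^ 3) ^ 9 - (x ^ 3 * a + x * a ^ 3) - (x ^ 9 * a + x * a ^ 9) := by
  rw [add_pow_nine, mul_pow, mul_pow, ← pow_mul, ← pow_mul, trinomialPolar]
  ring

end CharThree

section Field

variable {K : Type*} [Field K] [CharP K 3]

lemma pow_thirtytwo_ne_neg_one (hK : ∀ z : K, z ^ 81 = z) {a : K} (ha : a ≠ 0) :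
    a ^ 32 ≠ -1 := by
  intro h32
  have h80 : a ^ 80 = 1 := by
    apply mul_left_cancel₀ ha
    rw [← pow_succ', hK, mul_one]
  have h16 : a ^ 16 = 1 := by
    rw [← h80, show 80 = 32 + 32 + 16 by rfl, pow_add, pow_add, h32]
    ring
  have h3 : (3 : K) = 0 := CharP.cast_eq_zero K 3
  exact one_ne_zero (by linear_combination h3 - h32 + (1 + a ^ 16) * h16 : (1 : K) = 0)

lemma trinomialPolar_eq_zero_iff (hK : ∀ z : K, z ^ 81 = z) {x a : K} :
    trinomialPolar x a = 0 ↔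
      x ^ 9 * a + x * a ^ 9 = 0 ∧ (x ^ 3 * a + x * a ^ 3) ^ 9 = x ^ 3 * a + x * a ^ 3 := by
  rw [trinomialPolar_eq]
  set g := x ^ 3 * a + x * a ^ 3
  set t := x ^ 9 * a + x * a ^ 9
  refine ⟨fun h => ?_, fun ⟨ht, hg⟩ => by rw [hg, ht, sub_self, sub_zero]⟩
  have hg : g ^ 9 = g + t := by linear_combination h
  have ht : t ^ 9 = t := by
    simp only [t, add_pow_nine, mul_pow, ← pow_mul, hK]
    ring
  have h3 : (3 : K) = 0 := CharP.cast_eq_zero K 3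
  have ht0 : t = 0 := by
    have : g = g + t + t :=
      calc g = (g ^ 9) ^ 9 := by rw [← pow_mul]; exact (hK g).symm
        _ = g + t + t := by rw [hg, add_pow_nine, hg, ht]
    linear_combination t * h3 + this
  exact ⟨ht0, by rw [hg, ht0, add_zero]⟩

lemma eq_zero_of_trinomialPolar_eq_zero (hK : ∀ z : K, z ^ 81 = z) {x a : K} (ha : a ≠ 0)
    (h : trinomialPolar x a = 0) : x = 0 := by
  obtain ⟨ht, hg⟩ := (trinomialPolar_eq_zero_iff hK).mp h
  obtain ⟨u, rfl⟩ : ∃ u, x = u * a := ⟨x / a, (div_mul_cancel₀ x ha).symm⟩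
  have h3 : (3 : K) = 0 := CharP.cast_eq_zero K 3
  have hu9 : u ^ 9 = -u := by
    have : a ^ 10 * (u ^ 9 + u) = 0 := by linear_combination ht
    exact eq_neg_of_add_eq_zero_left ((mul_eq_zero.mp this).resolve_left (pow_ne_zero _ ha))
  have hu27 : (u ^ 3) ^ 9 = -u ^ 3 := by
    rw [← pow_mul, mul_comm, pow_mul, hu9]
    ring
  have hu3 : u ^ 3 = -u := by
    rw [show (u * a) ^ 3 * a + u * a * a ^ 3 = a ^ 4 * (u ^ 3 + u) by ring, mul_pow,
      add_pow_nine, hu27, hu9] at hg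
    have : a ^ 4 * (a ^ 32 + 1) * (u ^ 3 + u) = 0 := by linear_combination -hg
    refine eq_neg_of_add_eq_zero_left
      ((mul_eq_zero.mp this).resolve_left (mul_ne_zero (pow_ne_zero _ ha) ?_))
    exact fun h32 => pow_thirtytwo_ne_neg_one hK ha (eq_neg_of_add_eq_zero_left h32)
  have hu9' : u ^ 9 = u := by
    rw [show 9 = 3 * 3 by rfl, pow_mul, hu3]
    linear_combination -hu3
  have hu : u = 0 := by linear_combination u * h3 - hu9 + hu9'
  rw [hu, zero_mul]

end Field

lemma GaloisField.pow_prime_pow {p n : ℕ} [Fact p.Prime] (hn : n ≠ 0) (z : GaloisField p n) :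
    z ^ p ^ n = z := by
  have := Fintype.ofFinite (GaloisField p n)
  rw [← GaloisField.card p n hn, Nat.card_eq_fintype_card]
  exact FiniteField.pow_card z

/-- The trinomial `x^36 + 2x^10 + 2x^4` is planar over `F_{3^4}`. -/
theorem trinomial_planar_dim4 :
    ∀ a : GaloisField 3 4, a ≠ 0 →
      Function.Bijective
        (fun x : GaloisField 3 4 =>
          ((x + a) ^ 36 + 2 * (x + a) ^ 10 + 2 * (x + a) ^ 4)
            - (x ^ 36 + 2 * x ^ 10 + 2 * x ^ 4)) := by
  have hK (z : GaloisField 3 4) : z ^ 81 = z := by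
    simpa using GaloisField.pow_prime_pow (p := 3) four_ne_zero z
  intro a ha
  rw [← Finite.injective_iff_bijective]
  intro x y hxy
  change trinomial (x + a) - trinomial x = trinomial (y + a) - trinomial y at hxy
  rw [trinomial_add_sub, trinomial_add_sub] at hxy
  have hpolar : trinomialPolar (x - y) a = 0 := by
    rw [trinomialPolar_sub_left, add_left_cancel hxy, sub_self]
  exact sub_eq_zero.mp (eq_zero_of_trinomialPolar_eq_zero hK ha hpolar)
end
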